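/- Let v be a weight on ℝ such that v^{-1} (the reciprocal of v) is also a weight, and let {λ_I}_{I∈D} be a sequence of nonnegative numbers for which there exists Q > 0 with (1/|J|) Σ_{I∈D(J)} λ_I ≤ Q for every dyadic interval J ∈ D. Then for every J ∈ D: (1/|J|) Σ_{I∈D(J)} λ_I / m_I(v^{-1}) ≤ 4Q · m_J v. Consequently, if in addition [v]_{A_2^d} < ∞, then for every J ∈ D: (1/|J|) Σ_{I∈D(J)} λ_I · m_I v ≤ 4Q · [v]_{A_2^d} · m_J v. -/

import Mathlib

/-!
Beznosova's Bellman function argument. For `Q > 0` let `B(u, m, l) = 4Q (u - Q / (m (Q + l)))`.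
For a dyadic `J` and a finite family `F ⊆ D(J)`, induction on the depth of `F` gives
`∑_{I ∈ F} λ_I / m_I(v⁻¹) ≤ |J| B(m_J v, m_J(v⁻¹), |J|⁻¹ ∑_{I ∈ F} λ_I)`.
Splitting `F` into `J` and its parts inside the two halves of `J`, the inductive step is
`d / m + (B(x₁) + B(x₂)) / 2 ≤ B((x₁ + x₂) / 2 + (0, 0, d))` whenever the last coordinate
stays `≤ Q` (the Carleson condition): it follows from the midpoint convexity of
`(m, l) ↦ 1 / (m (Q + l))` and from the fact that this function decreases in `l` at rate at
least `1 / (4 Q² m)` on `0 ≤ l ≤ Q`. The base case is `B ≥ 0`, which holds because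
`m_J v · m_J(v⁻¹) ≥ 1`, and `B ≤ 4 Q u` gives the first estimate. The second one follows
termwise from `m_I v ≤ [v]_{A₂} / m_I(v⁻¹)`.
-/

open MeasureTheory Set

/-- The dyadic interval `[2^j k, 2^j (k+1))` indexed by `(j, k)`. -/
abbrev DI := ℤ × ℤ

noncomputable def DIset (I : DI) : Set ℝ :=
  Set.Ico ((2:ℝ)^I.1 * I.2) ((2:ℝ)^I.1 * (I.2 + 1))

noncomputable def DIlen (I : DI) : ℝ := (2:ℝ)^I.1

/-- The left half `I⁺` of a dyadic interval. -/
def DIleft (I : DI) : DI := (I.1 - 1, 2 * I.2)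

/-- The right half `I⁻` of a dyadic interval. -/
def DIright (I : DI) : DI := (I.1 - 1, 2 * I.2 + 1)

/-- `I ∈ D(J)`: `I` is a dyadic subinterval of `J`. -/
def DIsub (I J : DI) : Prop := DIset I ⊆ DIset J

/-- `m_I f`, the average of `f` over `I`. -/
noncomputable def avg (f : ℝ → ℝ) (I : DI) : ℝ := (DIlen I)⁻¹ * ∫ x in DIset I, f x

/-- The `L²`-normalized Haar function of `I`. -/
noncomputable def haar (I : DI) : ℝ → ℝ := fun x =>
  (Real.sqrt (DIlen I))⁻¹ *
    ((DIset (DIleft I)).indicator (fun _ => (1:ℝ)) x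
      - (DIset (DIright I)).indicator (fun _ => (1:ℝ)) x)

/-- `⟨f, h_I⟩`. -/
noncomputable def haarCoef (f : ℝ → ℝ) (I : DI) : ℝ := ∫ x, f x * haar I x

/-- A weight: measurable, a.e. positive, locally integrable. -/
def IsWeight (w : ℝ → ℝ) : Prop :=
  Measurable w ∧ (∀ᵐ x ∂(volume : Measure ℝ), 0 < w x) ∧ LocallyIntegrable w volume

/-- The measure `w dx`. -/
noncomputable def wMeasure (w : ℝ → ℝ) : Measure ℝ :=
  volume.withDensity (fun x => ENNReal.ofReal (w x))

/-- `Δ_I f = m_{I⁺} f − m_{I⁻} f`. -/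
noncomputable def deltaAvg (f : ℝ → ℝ) (I : DI) : ℝ := avg f (DIleft I) - avg f (DIright I)

lemma DIlen_pos (I : DI) : 0 < DIlen I := zpow_pos two_pos _

lemma DIlen_left (J : DI) : DIlen (DIleft J) = DIlen J / 2 := by
  rw [DIlen, DIlen, DIleft, zpow_sub_one₀ two_ne_zero, div_eq_mul_inv]

lemma DIlen_right (J : DI) : DIlen (DIright J) = DIlen J / 2 := DIlen_left J

lemma DIset_left (J : DI) :
    DIset (DIleft J) = Ico ((2:ℝ) ^ J.1 * J.2) ((2:ℝ) ^ J.1 * (J.2 + 1 / 2)) := by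
  rw [DIset, DIleft, zpow_sub_one₀ two_ne_zero]
  push_cast
  congr 1 <;> ring

lemma DIset_right (J : DI) :
    DIset (DIright J) = Ico ((2:ℝ) ^ J.1 * (J.2 + 1 / 2)) ((2:ℝ) ^ J.1 * (J.2 + 1)) := by
  rw [DIset, DIright, zpow_sub_one₀ two_ne_zero]
  push_cast
  congr 1 <;> ring

lemma DIset_left_union_right (J : DI) : DIset (DIleft J) ∪ DIset (DIright J) = DIset J := by
  rw [DIset_left, DIset_right, Ico_union_Ico_eq_Ico] <;> first | rfl | (gcongr; norm_num)

lemma disjoint_DIset_left_right (J : DI) : Disjoint (DIset (DIleft J)) (DIset (DIright J)) := by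
  rw [DIset_left, DIset_right]
  exact Ico_disjoint_Ico_same

lemma volume_DIset (I : DI) : volume (DIset I) = ENNReal.ofReal (DIlen I) := by
  rw [DIset, Real.volume_Ico, DIlen]
  ring_nf

lemma left_mem_DIset (I : DI) : (2:ℝ) ^ I.1 * I.2 ∈ DIset I :=
  left_mem_Ico.2 (by gcongr; linarith)

lemma DIsub.scale_le {I J : DI} (h : DIsub I J) : I.1 ≤ J.1 := by
  have := measure_mono (μ := volume) h
  rw [volume_DIset, volume_DIset, ENNReal.ofReal_le_ofReal_iff (DIlen_pos J).le] at this
  exact (zpow_le_zpow_iff_right₀ one_lt_two).1 this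

lemma DIsub.eq_of_scale_eq {I J : DI} (h : DIsub I J) (hs : I.1 = J.1) : I = J := by
  have h₀ := (Ico_subset_Ico_iff (left_mem_DIset I).2).1 h
  rw [hs] at h₀
  have : (I.2 : ℝ) = J.2 := by
    have := zpow_pos (two_pos : (0:ℝ) < 2) J.1
    nlinarith [h₀.1, h₀.2]
  exact Prod.ext hs (by exact_mod_cast this)

lemma DIsub_of_scale_le_of_mem {I K : DI} (hs : I.1 ≤ K.1)
    (hI : (2:ℝ) ^ I.1 * I.2 ∈ DIset K) :
    DIsub I K := by
  -- the endpoints of `K` are integer multiples of `2 ^ I.1`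
  obtain ⟨M, hM⟩ : ∃ M : ℤ, (2:ℝ) ^ K.1 = 2 ^ I.1 * M := ⟨2 ^ (K.1 - I.1).toNat, by
    push_cast
    rw [← zpow_natCast, Int.toNat_of_nonneg (by omega), ← zpow_add₀ two_ne_zero]
    ring_nf⟩
  have h2 := zpow_pos (two_pos : (0:ℝ) < 2) I.1
  simp only [DIsub, DIset] at hI ⊢
  rw [hM] at hI ⊢
  have hlt : I.2 < M * (K.2 + 1) := by
    have : (I.2 : ℝ) < M * (K.2 + 1) := by nlinarith [hI.2]
    exact_mod_cast this
  have hle : ((I.2 + 1 : ℤ) : ℝ) ≤ M * (K.2 + 1) := by exact_mod_cast hlt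
  push_cast at hle
  exact Ico_subset_Ico hI.1 (by nlinarith)

lemma DIsub.left_or_right {I J : DI} (h : DIsub I J) (hne : I ≠ J) :
    DIsub I (DIleft J) ∨ DIsub I (DIright J) := by
  have hs : I.1 ≤ J.1 - 1 :=
    Int.le_sub_one_of_lt (h.scale_le.lt_of_ne fun hs => hne (h.eq_of_scale_eq hs))
  have hx := h (left_mem_DIset I)
  rw [← DIset_left_union_right] at hx
  exact hx.imp (DIsub_of_scale_le_of_mem hs) (DIsub_of_scale_le_of_mem hs)

lemma not_DIsub_left_self (J : DI) : ¬ DIsub J (DIleft J) := fun h => by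
  have := h.scale_le; simp [DIleft] at this

lemma not_DIsub_right_self (J : DI) : ¬ DIsub J (DIright J) := fun h => by
  have := h.scale_le; simp [DIright] at this

lemma DIsub.not_DIsub_right {I J : DI} (h : DIsub I (DIleft J)) : ¬ DIsub I (DIright J) :=
  fun h' => (disjoint_DIset_left_right J).ne_of_mem (h (left_mem_DIset I))
    (h' (left_mem_DIset I)) rfl

open Classical in
lemma sum_eq_ite_add_sum_left_add_sum_right {J : DI} {F : Finset DI} (hF : ∀ I ∈ F, DIsub I J)
    (g : DI → ℝ) :
    ∑ I ∈ F, g I = (if J ∈ F then g J else 0) + ∑ I ∈ F with DIsub I (DIleft J), g I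
      + ∑ I ∈ F with DIsub I (DIright J), g I := by
  rw [Finset.sum_filter, Finset.sum_filter, ← Finset.sum_ite_eq', ← Finset.sum_add_distrib,
    ← Finset.sum_add_distrib]
  refine Finset.sum_congr rfl fun I hI => ?_
  by_cases hIJ : I = J
  · subst hIJ
    simp [not_DIsub_left_self, not_DIsub_right_self]
  rcases (hF I hI).left_or_right hIJ with h | h
  · simp [hIJ, h, h.not_DIsub_right]
  · have h' : ¬ DIsub I (DIleft J) := fun h' => h'.not_DIsub_right h
    simp [hIJ, h, h']

lemma integrableOn_DIset {f : ℝ → ℝ} (hf : LocallyIntegrable f volume) (I : DI) :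
    IntegrableOn f (DIset I) volume :=
  (hf.integrableOn_isCompact isCompact_Icc).mono_set Ico_subset_Icc_self

lemma avg_eq_avg_left_add_avg_right {f : ℝ → ℝ} (hf : LocallyIntegrable f volume) (J : DI) :
    avg f J = (avg f (DIleft J) + avg f (DIright J)) / 2 := by
  have hint : ∫ x in DIset J, f x
      = (∫ x in DIset (DIleft J), f x) + ∫ x in DIset (DIright J), f x := by
    rw [← DIset_left_union_right]
    exact setIntegral_union (disjoint_DIset_left_right J) measurableSet_Ico
      (integrableOn_DIset hf _) (integrableOn_DIset hf _)
  have := DIlen_pos J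
  rw [avg, avg, avg, hint, DIlen_left, DIlen_right]
  field_simp

lemma avg_pos {w : ℝ → ℝ} (hw_pos : ∀ᵐ x, 0 < w x) (hw : LocallyIntegrable w volume)
    (I : DI) : 0 < avg w I := by
  refine mul_pos (inv_pos.2 (DIlen_pos I)) ?_
  rw [setIntegral_pos_iff_support_of_nonneg_ae
    (ae_restrict_of_ae (hw_pos.mono fun x hx => hx.le)) (integrableOn_DIset hw I)]
  calc (0 : ENNReal) < volume (DIset I) := by
        rw [volume_DIset]; exact ENNReal.ofReal_pos.2 (DIlen_pos I)
    _ ≤ volume (Function.support w ∩ DIset I) :=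
        measure_mono_ae (by filter_upwards [hw_pos] with x hx hxI using ⟨hx.ne', hxI⟩)

lemma one_le_avg_mul_avg_inv {v : ℝ → ℝ} (hv_pos : ∀ᵐ x, 0 < v x)
    (hv : LocallyIntegrable v volume) (hvinv : LocallyIntegrable (fun x => (v x)⁻¹) volume)
    (I : DI) : 1 ≤ avg v I * avg (fun x => (v x)⁻¹) I := by
  set A := ∫ x in DIset I, v x
  set B := ∫ x in DIset I, (v x)⁻¹
  set L := DIlen I
  have hL : 0 < L := DIlen_pos I
  have hA : 0 < A := pos_of_mul_pos_right (avg_pos hv_pos hv I) (inv_pos.2 hL).le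
  set t := L / A
  have ht : 0 < t := div_pos hL hA
  -- AM-GM `2 ≤ s + s⁻¹` at `s = t v x`, integrated over `I`;
  -- the choice of `t` turns it into `L ≤ A B / L`.
  have hamgm : ∫ x in DIset I, (2:ℝ) ≤ ∫ x in DIset I, (t * v x + t⁻¹ * (v x)⁻¹) := by
    refine setIntegral_mono_ae_restrict (integrableOn_const (by simp [volume_DIset]))
      (((integrableOn_DIset hv I).const_mul t).add ((integrableOn_DIset hvinv I).const_mul t⁻¹))
      (ae_restrict_of_ae ?_)
    filter_upwards [hv_pos] with x hx
    have hs := mul_pos ht hx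
    have e : (t * v x - 1) ^ 2 / (t * v x) = t * v x + t⁻¹ * (v x)⁻¹ - 2 := by
      field_simp
      ring
    linarith [div_nonneg (sq_nonneg (t * v x - 1)) hs.le]
  rw [setIntegral_const, measureReal_def, volume_DIset, ENNReal.toReal_ofReal hL.le, smul_eq_mul,
    integral_add ((integrableOn_DIset hv I).const_mul t)
      ((integrableOn_DIset hvinv I).const_mul t⁻¹),
    integral_const_mul, integral_const_mul] at hamgm
  have key : L * 2 ≤ t * A + t⁻¹ * B := hamgm
  rw [div_mul_cancel₀ L hA.ne', inv_div, div_mul_eq_mul_div] at key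
  have hAB : L * L ≤ A * B := (le_div_iff₀ hL).1 (by linarith)
  show 1 ≤ L⁻¹ * A * (L⁻¹ * B)
  rw [show L⁻¹ * A * (L⁻¹ * B) = A * B / (L * L) by field_simp]
  exact (one_le_div (by positivity)).2 hAB

lemma inv_mul_midpoint_le {a b c e : ℝ} (ha : 0 < a) (hb : 0 < b) (hc : 0 < c) (he : 0 < e) :
    ((a + b) / 2 * ((c + e) / 2))⁻¹ ≤ ((a * c)⁻¹ + (b * e)⁻¹) / 2 := by
  rw [inv_eq_one_div, inv_eq_one_div, inv_eq_one_div,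
    div_add_div _ _ (by positivity) (by positivity), div_div,
    div_le_div_iff₀ (by positivity) (by positivity)]
  -- `(a + b) (c + e) (a c + b e) - 8 a b c e = (a c - b e)² + c e (a - b)² + a b (c - e)²`
  nlinarith [sq_nonneg (a * c - b * e), mul_nonneg (mul_pos hc he).le (sq_nonneg (a - b)),
    mul_nonneg (mul_pos ha hb).le (sq_nonneg (c - e))]

noncomputable def bellman (Q u m l : ℝ) : ℝ := 4 * Q * (u - Q / (m * (Q + l)))

section Bellman

variable {Q u m l : ℝ}

lemma bellman_le (hQ : 0 ≤ Q) (hm : 0 < m) (hl : 0 ≤ l) : bellman Q u m l ≤ 4 * Q * u := by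
  have : 0 ≤ Q / (m * (Q + l)) := by positivity
  rw [bellman]
  nlinarith

lemma bellman_nonneg (hQ : 0 < Q) (hm : 0 < m) (hl : 0 ≤ l) (hum : 1 ≤ u * m) :
    0 ≤ bellman Q u m l := by
  have : Q / (m * (Q + l)) ≤ u := by
    rw [div_le_iff₀ (by positivity)]
    nlinarith
  rw [bellman]
  nlinarith

lemma div_le_bellman_sub (hQ : 0 < Q) (hm : 0 < m) (hl : 0 ≤ l) {d : ℝ} (hd : 0 ≤ d)
    (hld : l + d ≤ Q) :
    d / m ≤ 4 * Q * (Q / (m * (Q + l)) - Q / (m * (Q + (l + d)))) := by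
  rw [show 4 * Q * (Q / (m * (Q + l)) - Q / (m * (Q + (l + d))))
      = d / m * (4 * Q ^ 2 / ((Q + l) * (Q + (l + d)))) by field_simp; ring]
  refine le_mul_of_one_le_right (by positivity) ((one_le_div (by positivity)).2 ?_)
  nlinarith

lemma bellman_midpoint_add_le {u₁ u₂ m₁ m₂ l₁ l₂ d : ℝ} (hQ : 0 < Q)
    (hm₁ : 0 < m₁) (hm₂ : 0 < m₂) (hl₁ : 0 ≤ l₁) (hl₂ : 0 ≤ l₂) (hd : 0 ≤ d)
    (hle : (l₁ + l₂) / 2 + d ≤ Q) :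
    d / ((m₁ + m₂) / 2) + (bellman Q u₁ m₁ l₁ + bellman Q u₂ m₂ l₂) / 2
      ≤ bellman Q ((u₁ + u₂) / 2) ((m₁ + m₂) / 2) ((l₁ + l₂) / 2 + d) := by
  have hdrop := div_le_bellman_sub hQ (by positivity : 0 < (m₁ + m₂) / 2)
    (by positivity : 0 ≤ (l₁ + l₂) / 2) hd hle
  have hconv : Q / ((m₁ + m₂) / 2 * (Q + (l₁ + l₂) / 2))
      ≤ (Q / (m₁ * (Q + l₁)) + Q / (m₂ * (Q + l₂))) / 2 := by
    have := mul_le_mul_of_nonneg_left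
      (inv_mul_midpoint_le hm₁ hm₂ (by positivity : 0 < Q + l₁)
        (by positivity : 0 < Q + l₂)) hQ.le
    exact (le_of_eq (by ring)).trans (this.trans_eq (by ring))
  rw [bellman, bellman, bellman]
  nlinarith

end Bellman

lemma exists_nat_forall_lt_add (J : DI) (F : Finset DI) :
    ∃ n : ℕ, ∀ I ∈ F, J.1 < I.1 + n := by
  obtain ⟨k, hk⟩ := (F.image Prod.fst).bddBelow
  refine ⟨(J.1 - k + 1).toNat, fun I hI => ?_⟩
  have := hk (Finset.mem_coe.2 (Finset.mem_image_of_mem Prod.fst hI))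
  omega

section Embedding

variable {u m lam : DI → ℝ} {Q : ℝ}
  (hu : ∀ J, u J = (u (DIleft J) + u (DIright J)) / 2)
  (hm : ∀ J, m J = (m (DIleft J) + m (DIright J)) / 2)
  (hm_pos : ∀ J, 0 < m J) (hum : ∀ J, 1 ≤ u J * m J) (hlam : ∀ I, 0 ≤ lam I) (hQ : 0 < Q)
  (hCarl : ∀ (J : DI) (F : Finset DI), (∀ I ∈ F, DIsub I J) →
    (DIlen J)⁻¹ * ∑ I ∈ F, lam I ≤ Q)
include hu hm hm_pos hum hlam hQ hCarl

theorem sum_div_le_bellman (n : ℕ) (J : DI) (F : Finset DI) (hF : ∀ I ∈ F, DIsub I J)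
    (hdepth : ∀ I ∈ F, J.1 < I.1 + n) :
    ∑ I ∈ F, lam I / m I
      ≤ DIlen J * bellman Q (u J) (m J) ((DIlen J)⁻¹ * ∑ I ∈ F, lam I) := by
  induction n generalizing J F with
  | zero =>
    have hF₀ : F = ∅ := Finset.eq_empty_of_forall_notMem fun I hI => by
      have := (hF I hI).scale_le
      have := hdepth I hI
      omega
    rw [hF₀, Finset.sum_empty]
    exact mul_nonneg (DIlen_pos J).le (bellman_nonneg hQ (hm_pos J) (by simp) (hum J))
  | succ n ih =>
    classical
    set L := DIlen J
    have hL : 0 < L := DIlen_pos J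
    have hF₁ : ∀ I ∈ F.filter (DIsub · (DIleft J)), DIsub I (DIleft J) :=
      fun I hI => (Finset.mem_filter.1 hI).2
    have hF₂ : ∀ I ∈ F.filter (DIsub · (DIright J)), DIsub I (DIright J) :=
      fun I hI => (Finset.mem_filter.1 hI).2
    have ih₁ := ih (DIleft J) _ hF₁ fun I hI => by
      have := hdepth I (Finset.mem_filter.1 hI).1
      simp only [DIleft]
      omega
    have ih₂ := ih (DIright J) _ hF₂ fun I hI => by
      have := hdepth I (Finset.mem_filter.1 hI).1
      simp only [DIright]
      omega
    rw [DIlen_left] at ih₁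
    rw [DIlen_right] at ih₂
    set e := if J ∈ F then lam J else 0
    have he : 0 ≤ e := ite_nonneg (hlam J) le_rfl
    have hl : L⁻¹ * ∑ I ∈ F, lam I
        = ((L / 2)⁻¹ * ∑ I ∈ F with DIsub I (DIleft J), lam I
          + (L / 2)⁻¹ * ∑ I ∈ F with DIsub I (DIright J), lam I) / 2 + e / L := by
      rw [sum_eq_ite_add_sum_left_add_sum_right hF lam]
      field_simp
      ring
    have key := bellman_midpoint_add_le hQ (hm_pos (DIleft J)) (hm_pos (DIright J))
      (mul_nonneg (by positivity) (Finset.sum_nonneg fun I _ => hlam I))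
      (mul_nonneg (by positivity) (Finset.sum_nonneg fun I _ => hlam I)) (by positivity)
      (hl ▸ hCarl J F hF) (u₁ := u (DIleft J)) (u₂ := u (DIright J))
    rw [← hu J, ← hm J, ← hl] at key
    calc ∑ I ∈ F, lam I / m I
        = e / m J + ∑ I ∈ F with DIsub I (DIleft J), lam I / m I
          + ∑ I ∈ F with DIsub I (DIright J), lam I / m I := by
          rw [sum_eq_ite_add_sum_left_add_sum_right hF, ite_div, zero_div]
      _ ≤ L * (e / L / m J + (bellman Q (u (DIleft J)) (m (DIleft J))
              ((L / 2)⁻¹ * ∑ I ∈ F with DIsub I (DIleft J), lam I)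
            + bellman Q (u (DIright J)) (m (DIright J))
              ((L / 2)⁻¹ * ∑ I ∈ F with DIsub I (DIright J), lam I)) / 2) := by
          rw [div_div, mul_add, mul_div_assoc', mul_div_mul_left _ _ hL.ne']
          linarith
      _ ≤ L * bellman Q (u J) (m J) (L⁻¹ * ∑ I ∈ F, lam I) :=
          mul_le_mul_of_nonneg_left key hL.le

theorem sum_div_le_four_mul (J : DI) (F : Finset DI) (hF : ∀ I ∈ F, DIsub I J) :
    (DIlen J)⁻¹ * ∑ I ∈ F, lam I / m I ≤ 4 * Q * u J := by
  obtain ⟨n, hn⟩ := exists_nat_forall_lt_add J F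
  have hL := DIlen_pos J
  rw [inv_mul_le_iff₀ hL]
  exact (sum_div_le_bellman hu hm hm_pos hum hlam hQ hCarl n J F hF hn).trans
    (mul_le_mul_of_nonneg_left (bellman_le hQ.le (hm_pos J)
      (mul_nonneg (by positivity) (Finset.sum_nonneg fun I _ => hlam I))) hL.le)

theorem sum_mul_le_four_mul_mul {A : ℝ} (hA : ∀ I, u I * m I ≤ A) (J : DI) (F : Finset DI)
    (hF : ∀ I ∈ F, DIsub I J) :
    (DIlen J)⁻¹ * ∑ I ∈ F, lam I * u I ≤ 4 * Q * A * u J := by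
  have hA₀ : 0 ≤ A := zero_le_one.trans ((hum J).trans (hA J))
  have hterm : ∀ I ∈ F, lam I * u I ≤ A * (lam I / m I) := fun I _ =>
    calc lam I * u I ≤ lam I * (A / m I) :=
          mul_le_mul_of_nonneg_left ((le_div_iff₀ (hm_pos I)).2 (hA I)) (hlam I)
      _ = A * (lam I / m I) := by ring
  calc (DIlen J)⁻¹ * ∑ I ∈ F, lam I * u I
      ≤ (DIlen J)⁻¹ * (A * ∑ I ∈ F, lam I / m I) := by
        refine mul_le_mul_of_nonneg_left ?_ (inv_nonneg.2 (DIlen_pos J).le)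
        rw [Finset.mul_sum]
        exact Finset.sum_le_sum hterm
    _ = A * ((DIlen J)⁻¹ * ∑ I ∈ F, lam I / m I) := by ring
    _ ≤ A * (4 * Q * u J) :=
        mul_le_mul_of_nonneg_left (sum_div_le_four_mul hu hm hm_pos hum hlam hQ hCarl J F hF) hA₀
    _ = 4 * Q * A * u J := by ring

end Embedding

/-- Sums over `D(J)` are formalized via arbitrary finite subfamilies of `D(J)`,
which is equivalent since all summands are nonnegative.  The `A₂` characteristic
`[v]_{A₂^d}` is represented by any upper bound `A2` for `m_I v · m_I (v⁻¹)`. -/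
theorem carleson_lemma_weight (v : ℝ → ℝ) (hv : IsWeight v)
    (hvinv : IsWeight (fun x => (v x)⁻¹))
    (lam : DI → ℝ) (hlam : ∀ I, 0 ≤ lam I)
    (Q : ℝ) (hQ : 0 < Q)
    (hCarl : ∀ (J : DI) (F : Finset DI), (∀ I ∈ F, DIsub I J) →
      (DIlen J)⁻¹ * ∑ I ∈ F, lam I ≤ Q) :
    (∀ (J : DI) (F : Finset DI), (∀ I ∈ F, DIsub I J) →
      (DIlen J)⁻¹ * ∑ I ∈ F, lam I / avg (fun x => (v x)⁻¹) I ≤ 4 * Q * avg v J)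
    ∧
    (∀ A2 : ℝ, (∀ I : DI, avg v I * avg (fun x => (v x)⁻¹) I ≤ A2) →
      ∀ (J : DI) (F : Finset DI), (∀ I ∈ F, DIsub I J) →
        (DIlen J)⁻¹ * ∑ I ∈ F, lam I * avg v I ≤ 4 * Q * A2 * avg v J) := by
  have hu := avg_eq_avg_left_add_avg_right hv.2.2
  have hm := avg_eq_avg_left_add_avg_right hvinv.2.2
  have hm_pos := avg_pos hvinv.2.1 hvinv.2.2
  have hum := one_le_avg_mul_avg_inv hv.2.1 hv.2.2 hvinv.2.2
  exact ⟨sum_div_le_four_mul hu hm hm_pos hum hlam hQ hCarl,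
    fun _ hA2 => sum_mul_le_four_mul_mul hu hm hm_pos hum hlam hQ hCarl hA2⟩
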